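/- arXiv:2110.04682 — 6 statements merged into one kernel-verified Lean document; each statement's English description precedes it below -/
import Mathlib

section
/- Let R be a commutative ring and q ∈ R with q^{n+1} = 0. Define the R-algebra homomorphism ι : R[[x₁,x₂]]/(x₁x₂ − q) → R((x₁)) ⊕ R((x₂)) by x₁ ↦ (x₁, q/x₂) and x₂ ↦ (q/x₁, x₂). Then ι is injective. -/
/-! Let `d = f - g` and `e = (1,1)`, so that `x₁x₂ = X^e`. The `k`-th coefficient of the first
(resp. second) component of `ι f` is the diagonal sum `∑_{j ≤ n} q^j f_{m + j e}` at the boundary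
exponent `m = (k, 0)` (resp. `(0, k)`), so `ι f = ι g` says that all diagonal sums of `d` vanish on
the boundary of `ℕ²`. Since `q` is nilpotent, `h_m := ∑_{j ≤ n} q^j d_{m + (j+1) e}` defines a power
series with `h_{m-e} - q h_m = d_m` (the sum telescopes), and the boundary condition is exactly
what makes this hold also for `m ≱ e`; hence `d = h (X^e - q)`. -/

open MvPowerSeries Finset

section DiagonalSum

variable {σ R : Type*} [CommRing R]

noncomputable def diagonalSum (q : R) (n : ℕ) (e : σ →₀ ℕ) (d : MvPowerSeries σ R)
    (m : σ →₀ ℕ) : R :=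
  ∑ j ∈ range (n + 1), q ^ j * coeff (m + j • e) d

variable {q : R} {n : ℕ} {e : σ →₀ ℕ}

theorem diagonalSum_sub (f g : MvPowerSeries σ R) (m : σ →₀ ℕ) :
    diagonalSum q n e (f - g) m = diagonalSum q n e f m - diagonalSum q n e g m := by
  simp only [diagonalSum, map_sub, mul_sub, sum_sub_distrib]

theorem diagonalSum_add_mul (hq : q ^ (n + 1) = 0) (d : MvPowerSeries σ R) (m : σ →₀ ℕ) :
    diagonalSum q n e d (m + e) * q = diagonalSum q n e d m - coeff m d := by
  have shift : diagonalSum q n e d (m + e) * q =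
      ∑ j ∈ range (n + 1), q ^ (j + 1) * coeff (m + (j + 1) • e) d := by
    rw [diagonalSum, sum_mul]
    refine sum_congr rfl fun j _ => ?_
    rw [add_smul, one_smul, add_assoc, add_comm e, pow_succ]
    ring
  have telescope := sum_range_succ' (fun j => q ^ j * coeff (m + j • e) d) (n + 1)
  rw [sum_range_succ, hq, zero_mul, add_zero] at telescope
  rw [shift, diagonalSum, telescope]
  simp

theorem mem_span_monomial_sub_C_of_diagonalSum_eq_zero (hq : q ^ (n + 1) = 0)
    {d : MvPowerSeries σ R} (hd : ∀ m, ¬ e ≤ m → diagonalSum q n e d m = 0) :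
    d ∈ Ideal.span {monomial e 1 - C q} := by
  rw [Ideal.mem_span_singleton']
  obtain ⟨h, coeff_h⟩ : ∃ h : MvPowerSeries σ R, ∀ m, coeff m h = diagonalSum q n e d (m + e) :=
    ⟨fun m => diagonalSum q n e d (m + e), fun _ => rfl⟩
  refine ⟨h, ?_⟩
  ext m
  rw [mul_sub, map_sub, coeff_mul_monomial, coeff_mul_C, mul_one, coeff_h, coeff_h,
    diagonalSum_add_mul hq]
  split_ifs with hm
  · rw [tsub_add_cancel_of_le hm]
    ring
  · rw [hd m hm]
    ring

end DiagonalSum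

theorem single_add_smul_single_add_single {σ : Type*} (i k : σ) (a j : ℕ) :
    Finsupp.single i a + j • (Finsupp.single i 1 + Finsupp.single k 1) =
      Finsupp.single i (a + j) + Finsupp.single k j := by
  simp [smul_add, Finsupp.smul_single, ← add_assoc, ← Finsupp.single_add]

theorem eq_single_or_eq_single_of_not_le {m : Fin 2 →₀ ℕ}
    (hm : ¬ Finsupp.single 0 1 + Finsupp.single 1 1 ≤ m) :
    m = Finsupp.single 0 (m 0) ∨ m = Finsupp.single 1 (m 1) := by
  have on_axis : m 1 = 0 ∨ m 0 = 0 := by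
    by_contra! h
    refine hm fun i => ?_
    fin_cases i <;> simp <;> omega
  rcases on_axis with h | h
  · left; ext i; fin_cases i <;> simp [h]
  · right; ext i; fin_cases i <;> simp [h]

theorem X_mul_X_eq_monomial {σ R : Type*} [CommRing R] (i k : σ) :
    (X i * X k : MvPowerSeries σ R) = monomial (Finsupp.single i 1 + Finsupp.single k 1) 1 := by
  rw [X_def, X_def, monomial_mul_monomial, one_mul]

theorem iota_injective (R : Type*) [CommRing R] (n : ℕ) (q : R) (hq : q ^ (n + 1) = 0)
    (ι : (MvPowerSeries (Fin 2) R ⧸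
        Ideal.span {MvPowerSeries.X (0 : Fin 2) * MvPowerSeries.X 1 -
          (MvPowerSeries.C (σ := Fin 2) (R := R) q)}) →
      LaurentSeries R × LaurentSeries R)
    (hι₁ : ∀ (f : MvPowerSeries (Fin 2) R) (k : ℤ),
      ((ι (Ideal.Quotient.mk _ f)).1).coeff k =
        ∑ j ∈ Finset.range (n + 1),
          if 0 ≤ k + (j : ℤ) then
            q ^ j * MvPowerSeries.coeff (R := R)
              (Finsupp.single (0 : Fin 2) (k + (j : ℤ)).toNat + Finsupp.single 1 j) f
          else 0)
    (hι₂ : ∀ (f : MvPowerSeries (Fin 2) R) (k : ℤ),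
      ((ι (Ideal.Quotient.mk _ f)).2).coeff k =
        ∑ j ∈ Finset.range (n + 1),
          if 0 ≤ k + (j : ℤ) then
            q ^ j * MvPowerSeries.coeff (R := R)
              (Finsupp.single (0 : Fin 2) j + Finsupp.single 1 (k + (j : ℤ)).toNat) f
          else 0) :
    Function.Injective ι := by
  set e : Fin 2 →₀ ℕ := Finsupp.single 0 1 + Finsupp.single 1 1
  have coeff_fst : ∀ f (a : ℕ),
      (ι (Ideal.Quotient.mk _ f)).1.coeff a = diagonalSum q n e f (Finsupp.single 0 a) := by
    intro f a
    rw [hι₁, diagonalSum]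
    refine sum_congr rfl fun j _ => ?_
    rw [if_pos (by positivity), single_add_smul_single_add_single]
    norm_cast
  have coeff_snd : ∀ f (b : ℕ),
      (ι (Ideal.Quotient.mk _ f)).2.coeff b = diagonalSum q n e f (Finsupp.single 1 b) := by
    intro f b
    rw [hι₂, diagonalSum]
    refine sum_congr rfl fun j _ => ?_
    rw [if_pos (by positivity), show e = Finsupp.single 1 1 + Finsupp.single 0 1 from add_comm _ _,
      single_add_smul_single_add_single, add_comm (Finsupp.single 1 _)]
    norm_cast
  intro a b hab
  obtain ⟨f, rfl⟩ := Ideal.Quotient.mk_surjective a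
  obtain ⟨g, rfl⟩ := Ideal.Quotient.mk_surjective b
  rw [Ideal.Quotient.eq, X_mul_X_eq_monomial]
  refine mem_span_monomial_sub_C_of_diagonalSum_eq_zero hq fun m hm => ?_
  rw [diagonalSum_sub, sub_eq_zero]
  rcases eq_single_or_eq_single_of_not_le hm with hm | hm <;> rw [hm]
  · rw [← coeff_fst, ← coeff_fst, hab]
  · rw [← coeff_snd, ← coeff_snd, hab]
end

section
/- Let R be a commutative ring and q ∈ R nilpotent. Let A(R) = R[[x₁,x₂]]/(x₁x₂ − q). If u ∈ A(R) is a unit satisfying x₁·u = x₁ and x₂·u^{-1} = x₂, then u = 1. -/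
/-! Write `f = x₁x₂ - q` and `v = u - 1`. The hypotheses say `x₁ v = x₂ v = 0` in `A(R)`, so a lift
`F` of `v` satisfies `f ∣ x₁F` and `f ∣ x₂F`. Since `q` is nilpotent, `f` is a non-zero-divisor of
`R[[x₁,x₂]]` (`x₁x₂ f' = q f'` gives `(x₁x₂)ⁿ f' = qⁿ f' = 0`); as moreover `x₂` is a
non-zero-divisor modulo `x₁`, the two divisibilities combine to `f ∣ F`, that is `v = 0`. -/

open MvPowerSeries
open scoped nonZeroDivisors

lemma sub_mem_nonZeroDivisors_of_isNilpotent {A : Type*} [CommRing A] {a q : A} (ha : a ∈ A⁰)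
    (hq : IsNilpotent q) : a - q ∈ A⁰ := by
  obtain ⟨n, hn⟩ := hq
  rw [mem_nonZeroDivisors_iff_left]
  intro P hP
  have hpow : ∀ k : ℕ, a ^ k * P = q ^ k * P := by
    intro k
    induction k with
    | zero => simp
    | succ k ih => linear_combination a * ih + q ^ k * hP
  exact (mul_left_mem_nonZeroDivisors_eq_zero_iff (pow_mem ha n)).mp (by rw [hpow, hn, zero_mul])

lemma dvd_of_dvd_mul_of_dvd_mul {A : Type*} [CommRing A] {a b f F : A} (hf : f ∈ A⁰)
    (ha : a ∈ A⁰) (hab : ∀ G H, b * G = a * H → a ∣ G) (hfa : f ∣ a * F) (hfb : f ∣ b * F) :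
    f ∣ F := by
  obtain ⟨G, hG⟩ := hfa
  obtain ⟨H, hH⟩ := hfb
  have hbGaH : b * G = a * H := by
    refine (mul_left_mem_nonZeroDivisors_eq_zero_iff hf).mp ?_ |> sub_eq_zero.mp
    linear_combination a * hH - b * hG
  obtain ⟨G', rfl⟩ := hab G H hbGaH
  refine ⟨G', (mul_left_mem_nonZeroDivisors_eq_zero_iff ha).mp ?_ |> sub_eq_zero.mp⟩
  linear_combination hG

namespace MvPowerSeries

variable {σ R : Type*}

lemma X_dvd_of_X_mul_eq_X_mul [CommSemiring R] {i j : σ} (hij : i ≠ j)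
    {G H : MvPowerSeries σ R} (h : X j * G = X i * H) : X i ∣ G := by
  have hdvd : X i ∣ X j * G := h ▸ dvd_mul_right _ _
  rw [X_dvd_iff] at hdvd ⊢
  intro m hm
  have := hdvd (Finsupp.single j 1 + m) (by simp [hm, hij.symm])
  rwa [X, coeff_add_monomial_mul, one_mul] at this

lemma X_mul_X_sub_C_mem_nonZeroDivisors [CommRing R] (i j : σ) {q : R} (hq : IsNilpotent q) :
    X i * X j - C q ∈ (MvPowerSeries σ R)⁰ :=
  sub_mem_nonZeroDivisors_of_isNilpotent (mul_mem X_mem_nonzeroDivisors X_mem_nonzeroDivisors)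
    (hq.map C)

lemma eq_zero_of_mk_X_mul_eq_zero [CommRing R] {i j : σ} (hij : i ≠ j) {q : R}
    (hq : IsNilpotent q) {v : MvPowerSeries σ R ⧸ Ideal.span {X i * X j - C q}}
    (hi : Ideal.Quotient.mk _ (X i) * v = 0) (hj : Ideal.Quotient.mk _ (X j) * v = 0) :
    v = 0 := by
  obtain ⟨F, rfl⟩ := Ideal.Quotient.mk_surjective v
  simp only [← map_mul, Ideal.Quotient.eq_zero_iff_mem, Ideal.mem_span_singleton] at hi hj ⊢
  exact dvd_of_dvd_mul_of_dvd_mul (X_mul_X_sub_C_mem_nonZeroDivisors i j hq)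
    X_mem_nonzeroDivisors (fun _ _ ↦ X_dvd_of_X_mul_eq_X_mul hij) hi hj

end MvPowerSeries

theorem unit_eq_one_of_fix (R : Type*) [CommRing R] (q : R) (hq : IsNilpotent q)
    (u : (MvPowerSeries (Fin 2) R ⧸
        Ideal.span {MvPowerSeries.X (0 : Fin 2) * MvPowerSeries.X 1 -
          MvPowerSeries.C (σ := Fin 2) (R := R) q})ˣ)
    (h₁ : Ideal.Quotient.mk _ (MvPowerSeries.X (0 : Fin 2)) * (u : MvPowerSeries (Fin 2) R ⧸
        Ideal.span {MvPowerSeries.X (0 : Fin 2) * MvPowerSeries.X 1 -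
          MvPowerSeries.C (σ := Fin 2) (R := R) q}) =
      Ideal.Quotient.mk _ (MvPowerSeries.X (0 : Fin 2)))
    (h₂ : Ideal.Quotient.mk _ (MvPowerSeries.X (1 : Fin 2)) * ((u⁻¹ : _ˣ) : MvPowerSeries (Fin 2) R ⧸
        Ideal.span {MvPowerSeries.X (0 : Fin 2) * MvPowerSeries.X 1 -
          MvPowerSeries.C (σ := Fin 2) (R := R) q}) =
      Ideal.Quotient.mk _ (MvPowerSeries.X (1 : Fin 2))) :
    (u : MvPowerSeries (Fin 2) R ⧸
        Ideal.span {MvPowerSeries.X (0 : Fin 2) * MvPowerSeries.X 1 -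
          MvPowerSeries.C (σ := Fin 2) (R := R) q}) = 1 := by
  have hX₂ := ((Units.mul_inv_eq_iff_eq_mul u).1 h₂).symm
  refine sub_eq_zero.mp (eq_zero_of_mk_X_mul_eq_zero Fin.zero_ne_one hq ?_ ?_)
  · rw [mul_sub, h₁, mul_one, sub_self]
  · rw [mul_sub, hX₂, mul_one, sub_self]
end

section
/- Let R be a Z[q]/(q^{n+1})-algebra with n ≥ 1 and suppose q^{2n} = 0 and every u ∈ A(R)^* of the form u = 1 + qⁿa (a ∈ A(R)) can be written as u = u₁ · α_{u₁}(u₂) where u₁ ∈ 1 + t₁R[[t₁]], u₂ ∈ 1 + qⁿR[[t₂]], and α_{u₁} is the automorphism of A(R) with α_{u₁}(t₁) = t₁u₁, α_{u₁}(t₂) = t₂u₁^{-1}. Specifically, writing a = a₁ + a₂ with a₁ ∈ t₁R[[t₁]] and a₂ ∈ R[[t₂]], one can take u₁ = 1 + qⁿa₁ and u₂ = 1 + qⁿa₂, and then u₁ · α_{u₁}(u₂) = 1 + qⁿ(a₁ + a₂) = u. -/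
/-!
Since `q ^ (2n) = 0`, `u₁⁻¹ = 1 - qⁿa₁`, and as `qⁿ t₁ t₂ = q^(n+1) = 0` this gives
`α(t₂) = t₂`. Then `α(g) - g` is divisible by every power of `t₂` for `g ∈ R[[t₂]]`
(peel off one coefficient at a time), so `u₁ · α(1 + qⁿg) = u₁ (1 + qⁿg) = 1 + qⁿ(a₁ + g)`
as soon as `⋂_N qⁿ t₂^N A(R) = 0`.

This last fact is a computation in `R[[t₁,t₂]]`. For an exponent `m` off the cone `(1,1) + ℕ²`
the functional `D_m z = ∑_{k ≤ n} qᵏ z_{m + (k,k)}` kills the ideal `(t₁t₂ - q)`, and these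
functionals cut out exactly that ideal; both follow from `D_m z = z_m + q D_{m + (1,1)} z`.
On `qⁿ t₂^N z` with `N > m₁` they vanish.
-/

/-- `A(R) = R[[t₁,t₂]]/(t₁t₂ - q)`. -/
noncomputable abbrev NodeAlg (R : Type*) [CommRing R] (q : R) :=
  MvPowerSeries (Fin 2) R ⧸
    Ideal.span {MvPowerSeries.X (0 : Fin 2) * MvPowerSeries.X 1 - MvPowerSeries.C (σ := Fin 2) (R := R) q}

/-- The projection `R[[t₁,t₂]] → A(R)`. -/
noncomputable abbrev nodeMk (R : Type*) [CommRing R] (q : R) :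
    MvPowerSeries (Fin 2) R →+* NodeAlg R q :=
  Ideal.Quotient.mk _

open MvPowerSeries Finsupp

namespace NodeAlg

variable {R : Type*} [CommRing R]

noncomputable def diag (k : ℕ) : Fin 2 →₀ ℕ := single 0 k + single 1 k

lemma diag_add (j k : ℕ) : diag (j + k) = diag j + diag k := by
  simp only [diag, single_add]
  abel

lemma X_zero_mul_X_one : (X 0 * X 1 : MvPowerSeries (Fin 2) R) = monomial (diag 1) 1 := by
  rw [X_def, X_def, monomial_mul_monomial, one_mul, diag]

lemma coeff_add_diag_one_X_zero_mul_X_one (m : Fin 2 →₀ ℕ) (d : MvPowerSeries (Fin 2) R) :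
    coeff (m + diag 1) (X 0 * X 1 * d) = coeff m d := by
  rw [X_zero_mul_X_one, add_comm, coeff_add_monomial_mul, one_mul]

noncomputable def twistedDiag (q : R) (n : ℕ) (m : Fin 2 →₀ ℕ) :
    MvPowerSeries (Fin 2) R →ₗ[R] R :=
  ∑ k ∈ Finset.range (n + 1), q ^ k • coeff (m + diag k)

lemma twistedDiag_apply (q : R) (n : ℕ) (m : Fin 2 →₀ ℕ) (z : MvPowerSeries (Fin 2) R) :
    twistedDiag q n m z = ∑ k ∈ Finset.range (n + 1), q ^ k * coeff (m + diag k) z := by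
  simp [twistedDiag]

variable {q : R} {n : ℕ}

lemma twistedDiag_eq_coeff_add (hq : q ^ (n + 1) = 0) (m : Fin 2 →₀ ℕ)
    (z : MvPowerSeries (Fin 2) R) :
    twistedDiag q n m z = coeff m z + q * twistedDiag q n (m + diag 1) z := by
  have hdiag : diag 0 = 0 := by simp [diag]
  rw [twistedDiag_apply, twistedDiag_apply, Finset.sum_range_succ', Finset.mul_sum,
    Finset.sum_range_succ _ n, ← mul_assoc q, ← pow_succ', hq, zero_mul, add_zero, hdiag, add_zero,
    pow_zero, one_mul, add_comm]
  congr 1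
  refine Finset.sum_congr rfl fun k _ => ?_
  rw [← mul_assoc, ← pow_succ', add_assoc, ← diag_add, add_comm 1 k]

lemma twistedDiag_add_diag_one_X_zero_mul_X_one (m : Fin 2 →₀ ℕ) (d : MvPowerSeries (Fin 2) R) :
    twistedDiag q n (m + diag 1) (X 0 * X 1 * d) = twistedDiag q n m d := by
  simp only [twistedDiag_apply, add_right_comm m (diag 1), coeff_add_diag_one_X_zero_mul_X_one]

lemma twistedDiag_rel_mul (hq : q ^ (n + 1) = 0) {m : Fin 2 →₀ ℕ} (hm : ¬ diag 1 ≤ m)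
    (d : MvPowerSeries (Fin 2) R) : twistedDiag q n m ((X 0 * X 1 - C q) * d) = 0 := by
  have hcoeff : coeff m (X 0 * X 1 * d) = 0 := by
    rw [X_zero_mul_X_one, coeff_monomial_mul, if_neg hm]
  rw [sub_mul, map_sub, twistedDiag_eq_coeff_add hq m (X 0 * X 1 * d), hcoeff,
    twistedDiag_add_diag_one_X_zero_mul_X_one, ← smul_eq_C_mul, map_smul, smul_eq_mul, zero_add,
    sub_self]

lemma mem_span_rel_iff_twistedDiag (hq : q ^ (n + 1) = 0) (z : MvPowerSeries (Fin 2) R) :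
    z ∈ Ideal.span {X 0 * X 1 - C q} ↔ ∀ m, ¬ diag 1 ≤ m → twistedDiag q n m z = 0 := by
  constructor
  · rintro hz m hm
    obtain ⟨d, rfl⟩ := Ideal.mem_span_singleton.mp hz
    exact twistedDiag_rel_mul hq hm d
  · intro hz
    let d : MvPowerSeries (Fin 2) R := fun p => twistedDiag q n (p + diag 1) z
    have hd (p : Fin 2 →₀ ℕ) : coeff p d = twistedDiag q n (p + diag 1) z := rfl
    refine Ideal.mem_span_singleton.mpr ⟨d, ?_⟩
    ext m
    have hshift := twistedDiag_eq_coeff_add hq m z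
    rw [sub_mul, map_sub, X_zero_mul_X_one, coeff_monomial_mul, coeff_C_mul, hd, hd]
    split_ifs with hm
    · rw [one_mul, tsub_add_cancel_of_le hm]
      linear_combination -hshift
    · linear_combination -hshift + hz m hm

lemma twistedDiag_C_pow_mul (hq : q ^ (n + 1) = 0) (m : Fin 2 →₀ ℕ) (z : MvPowerSeries (Fin 2) R) :
    twistedDiag q n m (C (q ^ n) * z) = q ^ n * coeff m z := by
  rw [twistedDiag_apply, Finset.sum_range_succ', Finset.sum_eq_zero fun k _ => ?_]
  · simp only [diag, single_zero, add_zero, pow_zero, one_mul, zero_add, coeff_C_mul]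
  · rw [coeff_C_mul, ← mul_assoc, ← pow_add, add_right_comm, add_assoc, pow_add, hq, mul_zero,
      zero_mul]

lemma mk_X_zero_mul_mk_X_one :
    nodeMk R q (X 0) * nodeMk R q (X 1) = algebraMap R (NodeAlg R q) q := by
  rw [← map_mul]
  exact Ideal.Quotient.eq.mpr (Ideal.subset_span rfl)

theorem eq_zero_of_forall_dvd (hq : q ^ (n + 1) = 0) {w : NodeAlg R q}
    (hw : ∀ N : ℕ, algebraMap R (NodeAlg R q) (q ^ n) * nodeMk R q (X 1) ^ N ∣ w) : w = 0 := by
  obtain ⟨z, rfl⟩ := Ideal.Quotient.mk_surjective w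
  refine Ideal.Quotient.eq_zero_iff_mem.mpr ((mem_span_rel_iff_twistedDiag hq z).mpr fun m hm => ?_)
  obtain ⟨y, hy⟩ := hw (m 1 + 1)
  obtain ⟨c, rfl⟩ := Ideal.Quotient.mk_surjective y
  set x : MvPowerSeries (Fin 2) R := C (q ^ n) * (X 1 ^ (m 1 + 1) * c)
  have hzx : z - x ∈ Ideal.span {X 0 * X 1 - C q} := Ideal.Quotient.eq.mp <| by
    rw [hy, mul_assoc]
    rfl
  have hcoeff : coeff m (X 1 ^ (m 1 + 1) * c) = 0 :=
    X_pow_dvd_iff.mp (dvd_mul_right _ _) m (Nat.lt_succ_self _)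
  rw [← sub_add_cancel z x, map_add, (mem_span_rel_iff_twistedDiag hq _).mp hzx m hm,
    twistedDiag_C_pow_mul hq, hcoeff, mul_zero, add_zero]

lemma exists_eq_C_add_X_one_mul {g : MvPowerSeries (Fin 2) R}
    (hg : ∀ m : Fin 2 →₀ ℕ, m 0 ≠ 0 → coeff m g = 0) :
    ∃ (c : R) (g' : MvPowerSeries (Fin 2) R), (∀ m : Fin 2 →₀ ℕ, m 0 ≠ 0 → coeff m g' = 0) ∧
      g = C c + X 1 * g' := by
  have hdvd : X 1 ∣ g - C (constantCoeff g) := X_dvd_iff.mpr fun m hm1 => by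
    by_cases hm0 : m 0 = 0
    · obtain rfl : m = 0 := by ext i; fin_cases i <;> assumption
      simp
    · rw [map_sub, hg m hm0, coeff_C, if_neg (by rintro rfl; exact hm0 rfl), sub_zero]
  obtain ⟨g', hg'⟩ := hdvd
  refine ⟨constantCoeff g, g', fun m hm => ?_, eq_add_of_sub_eq' hg'⟩
  have h := congrArg (coeff (single 1 1 + m)) hg'
  rwa [X_def, coeff_add_monomial_mul, one_mul, map_sub, hg _ (by simpa using hm), coeff_C,
    if_neg (by simp), sub_zero, eq_comm] at h

section AlgHomClass

variable {F : Type*} [FunLike F (NodeAlg R q) (NodeAlg R q)]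
  [AlgHomClass F R (NodeAlg R q) (NodeAlg R q)]

theorem mk_X_one_pow_dvd_map_sub (φ : F) (hφ : φ (nodeMk R q (X 1)) = nodeMk R q (X 1))
    {g : MvPowerSeries (Fin 2) R} (hg : ∀ m : Fin 2 →₀ ℕ, m 0 ≠ 0 → coeff m g = 0) (N : ℕ) :
    nodeMk R q (X 1) ^ N ∣ φ (nodeMk R q g) - nodeMk R q g := by
  induction N generalizing g with
  | zero => simp
  | succ N ih =>
    obtain ⟨c, g', hg', rfl⟩ := exists_eq_C_add_X_one_mul hg
    have hstep : φ (nodeMk R q (C c + X 1 * g')) - nodeMk R q (C c + X 1 * g') =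
        nodeMk R q (X 1) * (φ (nodeMk R q g') - nodeMk R q g') := by
      rw [map_add, map_add, map_mul, map_mul, hφ, show nodeMk R q (C c) = algebraMap R _ c from rfl,
        AlgHomClass.commutes]
      ring
    rw [hstep, pow_succ']
    exact mul_dvd_mul_left _ (ih hg')

theorem algebraMap_pow_mul_map_mk (hq : q ^ (n + 1) = 0) (φ : F)
    (hφ : φ (nodeMk R q (X 1)) = nodeMk R q (X 1)) {g : MvPowerSeries (Fin 2) R}
    (hg : ∀ m : Fin 2 →₀ ℕ, m 0 ≠ 0 → coeff m g = 0) :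
    algebraMap R (NodeAlg R q) (q ^ n) * φ (nodeMk R q g) =
      algebraMap R (NodeAlg R q) (q ^ n) * nodeMk R q g := by
  rw [← sub_eq_zero, ← mul_sub]
  exact eq_zero_of_forall_dvd hq fun N => mul_dvd_mul_left _ (mk_X_one_pow_dvd_map_sub φ hφ hg N)

end AlgHomClass

end NodeAlg

theorem glue_unit_factorization_general (R : Type*) [CommRing R] (n : ℕ) (hn : 1 ≤ n) (q : R)
    (hq : q ^ (n + 1) = 0)
    (f g : MvPowerSeries (Fin 2) R)
    (hg : ∀ m : Fin 2 →₀ ℕ, m 0 ≠ 0 → MvPowerSeries.coeff (R := R) m g = 0)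
    (u₁ : (NodeAlg R q)ˣ)
    (hu₁ : (u₁ : NodeAlg R q) =
      1 + algebraMap R (NodeAlg R q) (q ^ n) *
        nodeMk R q (MvPowerSeries.X (0 : Fin 2) * f))
    (α : NodeAlg R q ≃ₐ[R] NodeAlg R q)
    (hα₂ : α (nodeMk R q (MvPowerSeries.X (1 : Fin 2))) =
      nodeMk R q (MvPowerSeries.X (1 : Fin 2)) * ↑u₁⁻¹) :
    (u₁ : NodeAlg R q) *
        α (1 + algebraMap R (NodeAlg R q) (q ^ n) * nodeMk R q g) =
      1 + algebraMap R (NodeAlg R q) (q ^ n) *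
        (nodeMk R q (MvPowerSeries.X (0 : Fin 2) * f) + nodeMk R q g) := by
  set e := algebraMap R (NodeAlg R q) (q ^ n)
  have he : e * e = 0 := by
    rw [← map_mul, ← pow_add, show n + n = n + 1 + (n - 1) by omega, pow_add, hq, zero_mul,
      map_zero]
  have heq : e * algebraMap R (NodeAlg R q) q = 0 := by
    rw [← map_mul, ← pow_succ, hq, map_zero]
  have hinv : (↑u₁⁻¹ : NodeAlg R q) = 1 - e * nodeMk R q (X 0 * f) :=
    Units.inv_eq_of_mul_eq_one_right <| by
      rw [hu₁]
      linear_combination (-nodeMk R q (X 0 * f) ^ 2) * he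
  have hαX : α (nodeMk R q (X 1)) = nodeMk R q (X 1) := by
    rw [hα₂, hinv, map_mul]
    linear_combination
      (-e * nodeMk R q f) * NodeAlg.mk_X_zero_mul_mk_X_one (q := q) - nodeMk R q f * heq
  have key := NodeAlg.algebraMap_pow_mul_map_mk hq α hαX hg
  rw [map_add, map_one, map_mul, AlgEquiv.commutes, hu₁]
  linear_combination key + nodeMk R q (X 0 * f) * α (nodeMk R q g) * he

theorem glue_unit_factorization (R : Type*) [CommRing R] (n : ℕ) (hn : 1 ≤ n) (q : R)
    (hq : q ^ (n + 1) = 0)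
    (f g : MvPowerSeries (Fin 2) R)
    (hf : ∀ m : Fin 2 →₀ ℕ, m 1 ≠ 0 → MvPowerSeries.coeff (R := R) m f = 0)
    (hg : ∀ m : Fin 2 →₀ ℕ, m 0 ≠ 0 → MvPowerSeries.coeff (R := R) m g = 0)
    (u₁ : (NodeAlg R q)ˣ)
    (hu₁ : (u₁ : NodeAlg R q) =
      1 + algebraMap R (NodeAlg R q) (q ^ n) *
        nodeMk R q (MvPowerSeries.X (0 : Fin 2) * f))
    (α : NodeAlg R q ≃ₐ[R] NodeAlg R q)
    (hα₁ : α (nodeMk R q (MvPowerSeries.X (0 : Fin 2))) =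
      nodeMk R q (MvPowerSeries.X (0 : Fin 2)) * u₁)
    (hα₂ : α (nodeMk R q (MvPowerSeries.X (1 : Fin 2))) =
      nodeMk R q (MvPowerSeries.X (1 : Fin 2)) * ↑u₁⁻¹) :
    (u₁ : NodeAlg R q) *
        α (1 + algebraMap R (NodeAlg R q) (q ^ n) * nodeMk R q g) =
      1 + algebraMap R (NodeAlg R q) (q ^ n) *
        (nodeMk R q (MvPowerSeries.X (0 : Fin 2) * f) + nodeMk R q g) :=
  glue_unit_factorization_general R n hn q hq f g hg u₁ hu₁ α hα₂
end

section
/- Let R be a commutative ring, q, q' ∈ R nilpotent, and α : R[[x₁,x₂]]/(x₁x₂ − q') → R[[x₁,x₂]]/(x₁x₂ − q) a continuous R-algebra isomorphism sending the ideal (x₁) to (x₁) and (x₂) to (x₂). Then there is a unique λ ∈ R^* such that α factors as the isomorphism x₁ ↦ λx₁, x₂ ↦ x₂ (which requires q' = λq), followed by an automorphism of R[[x₁,x₂]]/(x₁x₂ − q) of the form x₁ ↦ x₁u, x₂ ↦ x₂u^{-1} for some unit u. -/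
/-!
Write `α(x₁) = x₁a` and `α(x₂) = x₂c`. Substituting `q` for `x₁x₂` puts every element of
`A = R[[x₁,x₂]]/(x₁x₂ - q)` in a normal form `∑ aᵢ x₁ⁱ + ∑_{j>0} bⱼ x₂ʲ`; its constant
term `ε = constTerm : A → R` is `R`-linear, vanishes on the annihilators of `x₁` and `x₂`,
and agrees with the constant coefficient modulo `q`. Since `α` maps `(xᵢ)` onto `(xᵢ)`, we have
`x₁(1 - ab) = 0` for some `b`, so `ε(ab) = 1`: `a` is a unit modulo the nilpotent `q`, hence
a unit; likewise `c`. Applying `ε` to `q' = α(x₁x₂) = q·ac` gives `q' = λq` with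
`λ = ε(ac)`. Since `q(ac - λ) = 0`, the normal form of `ac - λ` is `f + g` with
`x₂f = 0 = x₁g`, and `u = a(λ + g)⁻¹` does the job. Conversely any `λ, u` as in the
statement give `ac ≡ λ` modulo `Ann x₁ + Ann x₂`, so `λ = ε(ac)`.
-/

open MvPowerSeries Finset

theorem exists_unit_of_mul_eq_add_add {A : Type*} [CommRing A] {x₁ x₂ a c s f g : A}
    (ha : IsUnit a) (hsg : IsUnit (s + g)) (hac : a * c = s + f + g)
    (hf : x₂ * f = 0) (hg : x₁ * g = 0) :
    ∃ u : Aˣ, x₁ * a = s * (x₁ * u) ∧ x₂ * c = x₂ * ↑u⁻¹ := by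
  refine ⟨ha.unit * hsg.unit⁻¹, ?_, ?_⟩
  · have hv := hsg.mul_val_inv
    rw [Units.val_mul, IsUnit.unit_spec]
    linear_combination (-x₁ * a) * hv + (a * ↑hsg.unit⁻¹) * hg
  · have hw := ha.mul_val_inv
    rw [mul_inv_rev, inv_inv, Units.val_mul, IsUnit.unit_spec]
    linear_combination (-x₂ * c) * hw + (x₂ * ↑ha.unit⁻¹) * hac + ↑ha.unit⁻¹ * hf

lemma Ideal.isNilpotent_span_singleton {R : Type*} [CommRing R] {q : R} (hq : IsNilpotent q) :
    IsNilpotent (Ideal.span {q}) := by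
  obtain ⟨n, hn⟩ := hq
  exact ⟨n, by rw [Ideal.span_singleton_pow, hn, Ideal.span_singleton_eq_bot.mpr rfl,
    Ideal.zero_eq_bot]⟩

lemma Finsupp.le_iff_fin_two {e e' : Fin 2 →₀ ℕ} : e ≤ e' ↔ e 0 ≤ e' 0 ∧ e 1 ≤ e' 1 := by
  simp [Finsupp.le_def, Fin.forall_fin_two]

section

variable {σ R : Type*} [Semiring R]

lemma MvPowerSeries.coeff_X_mul (i : σ) (e : σ →₀ ℕ) (H : MvPowerSeries σ R) :
    coeff e (X i * H) =
      if Finsupp.single i 1 ≤ e then coeff (e - Finsupp.single i 1) H else 0 := by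
  rw [X_def, coeff_monomial_mul, one_mul]

lemma MvPowerSeries.coeff_add_single_X_mul (i : σ) (e : σ →₀ ℕ) (H : MvPowerSeries σ R) :
    coeff (e + Finsupp.single i 1) (X i * H) = coeff e H := by
  rw [coeff_X_mul, if_pos le_add_self, add_tsub_cancel_right]

end

namespace NodeAlg

variable {R : Type*} [CommRing R] (q : R) (n : ℕ)

local notation "δ" => (Finsupp.single (0 : Fin 2) 1 + Finsupp.single 1 1 : Fin 2 →₀ ℕ)

lemma coeff_X_mul_X_mul (e : Fin 2 →₀ ℕ) (H : MvPowerSeries (Fin 2) R) :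
    coeff e (X 0 * X 1 * H) = if δ ≤ e then coeff (e - δ) H else 0 := by
  rw [X_def, X_def, monomial_mul_monomial, one_mul, coeff_monomial_mul, one_mul]

/-- For `e` on the axes and `q ^ n = 0`, this is the coefficient of `x^e` in the normal form of
`F` modulo `x₁x₂ - q`, obtained by replacing each `x₁x₂` by `q`. -/
noncomputable def diagCoeff (e : Fin 2 →₀ ℕ) : MvPowerSeries (Fin 2) R →ₗ[R] R :=
  ∑ m ∈ range n, q ^ m • coeff (e + m • δ)

lemma diagCoeff_apply (e : Fin 2 →₀ ℕ) (F : MvPowerSeries (Fin 2) R) :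
    diagCoeff q n e F = ∑ m ∈ range n, q ^ m * coeff (e + m • δ) F := by
  simp [diagCoeff, LinearMap.sum_apply]

lemma diagCoeff_add_single_X_mul (i : Fin 2) (e : Fin 2 →₀ ℕ) (H : MvPowerSeries (Fin 2) R) :
    diagCoeff q n (e + Finsupp.single i 1) (X i * H) = diagCoeff q n e H := by
  simp only [diagCoeff_apply]
  exact sum_congr rfl fun m _ => by rw [add_right_comm, coeff_add_single_X_mul]

variable {q n}

lemma diagCoeff_eq_coeff_add (hn : q ^ n = 0) (e : Fin 2 →₀ ℕ) (F : MvPowerSeries (Fin 2) R) :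
    diagCoeff q n e F = coeff e F + q * diagCoeff q n (e + δ) F := by
  rcases n with _ | n
  · have : Subsingleton R := subsingleton_of_zero_eq_one (by simpa using hn.symm)
    exact Subsingleton.elim _ _
  rw [diagCoeff_apply, diagCoeff_apply, sum_range_succ', sum_range_succ _ n, mul_add,
    ← mul_assoc, ← pow_succ', hn, zero_mul, add_zero, mul_sum, add_comm (coeff e F)]
  congr 1
  · exact sum_congr rfl fun m _ => by rw [pow_succ', mul_assoc, succ_nsmul', ← add_assoc e]
  · simp

lemma diagCoeff_X_mul_X_mul (hn : q ^ n = 0) {e : Fin 2 →₀ ℕ} (he : ¬ δ ≤ e)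
    (H : MvPowerSeries (Fin 2) R) : diagCoeff q n e (X 0 * X 1 * H) = q * diagCoeff q n e H := by
  rw [diagCoeff_eq_coeff_add hn, coeff_X_mul_X_mul, if_neg he, zero_add, ← add_assoc,
    add_right_comm, mul_assoc, diagCoeff_add_single_X_mul, diagCoeff_add_single_X_mul]

lemma diagCoeff_eq_zero_of_mem (hn : q ^ n = 0) {e : Fin 2 →₀ ℕ} (he : ¬ δ ≤ e)
    {F : MvPowerSeries (Fin 2) R} (hF : F ∈ Ideal.span {X 0 * X 1 - C q}) :
    diagCoeff q n e F = 0 := by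
  obtain ⟨H, rfl⟩ := Ideal.mem_span_singleton.mp hF
  rw [sub_mul, ← smul_eq_C_mul, map_sub, map_smul, diagCoeff_X_mul_X_mul hn he, smul_eq_mul,
    sub_self]

variable (q n)

noncomputable def normalForm (F : MvPowerSeries (Fin 2) R) : MvPowerSeries (Fin 2) R :=
  fun e => if δ ≤ e then 0 else diagCoeff q n e F

/-- `i.rev` is the other variable; `X i * axisPart q n i F` is the part of `normalForm q n F`
on the open `xᵢ`-axis (see `normalForm_eq`). -/
noncomputable def axisPart (i : Fin 2) (F : MvPowerSeries (Fin 2) R) : MvPowerSeries (Fin 2) R :=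
  fun e => if e i.rev = 0 then diagCoeff q n (e + Finsupp.single i 1) F else 0

lemma coeff_normalForm (e : Fin 2 →₀ ℕ) (F : MvPowerSeries (Fin 2) R) :
    coeff e (normalForm q n F) = if δ ≤ e then 0 else diagCoeff q n e F := rfl

lemma coeff_axisPart (i : Fin 2) (e : Fin 2 →₀ ℕ) (F : MvPowerSeries (Fin 2) R) :
    coeff e (axisPart q n i F) =
      if e i.rev = 0 then diagCoeff q n (e + Finsupp.single i 1) F else 0 := rfl

variable {q n}

lemma sub_normalForm_mem (hn : q ^ n = 0) (F : MvPowerSeries (Fin 2) R) :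
    F - normalForm q n F ∈ Ideal.span {X 0 * X 1 - C q} := by
  refine Ideal.mem_span_singleton.mpr
    ⟨show MvPowerSeries (Fin 2) R from fun e => diagCoeff q n (e + δ) F, ?_⟩
  ext e
  rw [map_sub, sub_mul, map_sub, coeff_C_mul, coeff_normalForm, coeff_X_mul_X_mul]
  change _ = _ - q * diagCoeff q n (e + δ) F
  split_ifs with h
  · change _ = diagCoeff q n (e - δ + δ) F - _
    rw [tsub_add_cancel_of_le h, diagCoeff_eq_coeff_add hn]
    ring
  · rw [diagCoeff_eq_coeff_add hn]
    ring

lemma normalForm_eq (F : MvPowerSeries (Fin 2) R) :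
    normalForm q n F =
      C (diagCoeff q n 0 F) + X 0 * axisPart q n 0 F + X 1 * axisPart q n 1 F := by
  ext e
  simp only [map_add, coeff_normalForm, coeff_C, coeff_X_mul, coeff_axisPart,
    Finsupp.le_iff_fin_two, Finsupp.ext_iff, Fin.forall_fin_two]
  split_ifs <;> simp_all
  all_goals (congr 2; ext i; fin_cases i <;> simp <;> omega)

lemma mk_X_mul_X : nodeMk R q (X 0 * X 1) = algebraMap R (NodeAlg R q) q := by
  rw [← sub_eq_zero]
  exact Ideal.Quotient.eq_zero_iff_mem.mpr (Ideal.subset_span rfl)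

lemma mk_X_mul_X_mul (P : MvPowerSeries (Fin 2) R) :
    nodeMk R q (X 0 * X 1 * P) = nodeMk R q (q • P) := by
  rw [map_mul, mk_X_mul_X, smul_eq_C_mul, map_mul]
  rfl

lemma diagCoeff_eq_zero_of_mk_eq_zero (hn : q ^ n = 0) {e : Fin 2 →₀ ℕ} (he : ¬ δ ≤ e)
    {F : MvPowerSeries (Fin 2) R} (hF : nodeMk R q F = 0) : diagCoeff q n e F = 0 :=
  diagCoeff_eq_zero_of_mem hn he (Ideal.Quotient.eq_zero_iff_mem.mp hF)

noncomputable def constTerm (hn : q ^ n = 0) : NodeAlg R q →ₗ[R] R :=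
  (Submodule.liftQ _ (diagCoeff q n 0) fun _ hF =>
      diagCoeff_eq_zero_of_mem hn (by simp) hF).comp
    (Submodule.Quotient.restrictScalarsEquiv R _).symm.toLinearMap

lemma constTerm_mk (hn : q ^ n = 0) (F : MvPowerSeries (Fin 2) R) :
    constTerm hn (nodeMk R q F) = diagCoeff q n 0 F := rfl

lemma constTerm_algebraMap (hn : q ^ n = 0) (r : R) :
    constTerm hn (algebraMap R (NodeAlg R q) r) = r := by
  change diagCoeff q n 0 (C r) = r
  rw [diagCoeff_eq_coeff_add hn, coeff_zero_C, diagCoeff_apply,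
    sum_eq_zero fun m _ => by simp [coeff_C], mul_zero, add_zero]

lemma constTerm_algebraMap_mul (hn : q ^ n = 0) (r : R) (z : NodeAlg R q) :
    constTerm hn (algebraMap R (NodeAlg R q) r * z) = r * constTerm hn z := by
  obtain ⟨F, rfl⟩ := Ideal.Quotient.mk_surjective z
  change diagCoeff q n 0 (C r * F) = r * diagCoeff q n 0 F
  rw [← smul_eq_C_mul, map_smul, smul_eq_mul]

lemma constTerm_eq_zero_of_X_mul_eq_zero (hn : q ^ n = 0) (i : Fin 2) {z : NodeAlg R q}
    (h : nodeMk R q (X i) * z = 0) : constTerm hn z = 0 := by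
  obtain ⟨H, rfl⟩ := Ideal.Quotient.mk_surjective z
  rw [← map_mul] at h
  have := diagCoeff_eq_zero_of_mk_eq_zero hn (e := 0 + Finsupp.single i 1)
    (by fin_cases i <;> simp) h
  rwa [diagCoeff_add_single_X_mul] at this

lemma constTerm_mul_eq_of_X_mul_sub_eq_zero (hn : q ^ n = 0) {a a' c c' : NodeAlg R q}
    (ha : nodeMk R q (X 0) * (a - a') = 0) (hc : nodeMk R q (X 1) * (c - c') = 0) :
    constTerm hn (a * c) = constTerm hn (a' * c') := by
  have hac : a * c = a' * c' + (a - a') * c + a' * (c - c') := by ring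
  rw [hac, map_add, map_add,
    constTerm_eq_zero_of_X_mul_eq_zero hn 0 (z := (a - a') * c)
      (by rw [← mul_assoc, ha, zero_mul]),
    constTerm_eq_zero_of_X_mul_eq_zero hn 1 (z := a' * (c - c'))
      (by rw [mul_left_comm, hc, mul_zero]),
    add_zero, add_zero]

theorem exists_eq_algebraMap_constTerm_add_add (hn : q ^ n = 0) {z : NodeAlg R q}
    (hz : algebraMap R (NodeAlg R q) q * z = 0) :
    ∃ f g, z = algebraMap R (NodeAlg R q) (constTerm hn z) + f + g ∧
      nodeMk R q (X 1) * f = 0 ∧ nodeMk R q (X 0) * g = 0 := by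
  obtain ⟨F, rfl⟩ := Ideal.Quotient.mk_surjective z
  have hqF : nodeMk R q (q • F) = 0 := by
    rw [smul_eq_C_mul, map_mul]
    exact hz
  have hq_axisPart (i : Fin 2) : q • axisPart q n i F = 0 := by
    ext e
    rw [coeff_smul, coeff_axisPart, map_zero]
    split_ifs with he
    · rw [← smul_eq_mul, ← map_smul, diagCoeff_eq_zero_of_mk_eq_zero hn
        (by fin_cases i <;> simp_all [Finsupp.le_iff_fin_two]) hqF]
    · exact mul_zero q
  refine ⟨nodeMk R q (X 0 * axisPart q n 0 F), nodeMk R q (X 1 * axisPart q n 1 F), ?_, ?_, ?_⟩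
  · nth_rw 1 [Ideal.Quotient.mk_eq_mk_iff_sub_mem _ _ |>.mpr (sub_normalForm_mem hn F)]
    rw [normalForm_eq, map_add, map_add, constTerm_mk]
    rfl
  · rw [← map_mul, ← mul_assoc, mul_comm (X 1), mk_X_mul_X_mul, hq_axisPart, map_zero]
  · rw [← map_mul, ← mul_assoc, mk_X_mul_X_mul, hq_axisPart, map_zero]

variable (q) in
/-- Reduction modulo `(x₁, x₂)`; because `x₁x₂ = q` it only lands in `R ⧸ (q)`. -/
noncomputable def residue : NodeAlg R q →+* R ⧸ Ideal.span {q} :=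
  Ideal.Quotient.lift _ ((Ideal.Quotient.mk _).comp constantCoeff) fun F hF => by
    obtain ⟨H, rfl⟩ := Ideal.mem_span_singleton.mp hF
    rw [RingHom.comp_apply, Ideal.Quotient.eq_zero_iff_mem, Ideal.mem_span_singleton]
    simp

lemma residue_mk (F : MvPowerSeries (Fin 2) R) :
    residue q (nodeMk R q F) = Ideal.Quotient.mk _ (constantCoeff F) := rfl

lemma residue_eq_mk_constTerm (hn : q ^ n = 0) (z : NodeAlg R q) :
    residue q z = Ideal.Quotient.mk _ (constTerm hn z) := by
  obtain ⟨F, rfl⟩ := Ideal.Quotient.mk_surjective z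
  rw [residue_mk, constTerm_mk, diagCoeff_eq_coeff_add hn, Ideal.Quotient.mk_eq_mk_iff_sub_mem,
    coeff_zero_eq_constantCoeff_apply, sub_add_cancel_left]
  exact neg_mem (Ideal.mul_mem_right _ _ (Ideal.mem_span_singleton_self q))

lemma isUnit_of_isUnit_residue (hq : IsNilpotent q) {z : NodeAlg R q}
    (h : IsUnit (residue q z)) : IsUnit z := by
  obtain ⟨F, rfl⟩ := Ideal.Quotient.mk_surjective z
  rw [residue_mk, (Ideal.isNilpotent_span_singleton hq).isUnit_quotient_mk_iff,
    ← isUnit_iff_constantCoeff] at h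
  exact h.map _

theorem exists_unit_of_map_span_singleton_eq {S : Type*} [CommRing S] (hn : q ^ n = 0)
    (f : S →+* NodeAlg R q) (y : S) (i : Fin 2)
    (h : Ideal.map f (Ideal.span {y}) = Ideal.span {nodeMk R q (X i)}) :
    ∃ a : (NodeAlg R q)ˣ, f y = nodeMk R q (X i) * a := by
  rw [Ideal.map_span, Set.image_singleton] at h
  obtain ⟨a, ha⟩ := Ideal.span_singleton_le_span_singleton.mp h.le
  obtain ⟨b, hb⟩ := Ideal.span_singleton_le_span_singleton.mp h.ge
  have hab : nodeMk R q (X i) * (1 - a * b) = 0 := by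
    rw [ha] at hb
    linear_combination hb
  have hres : residue q a * residue q b = 1 := by
    have h0 : residue q (1 - a * b) = 0 := by
      rw [residue_eq_mk_constTerm hn, constTerm_eq_zero_of_X_mul_eq_zero hn i hab, map_zero]
    rwa [map_sub, map_one, map_mul, sub_eq_zero, eq_comm] at h0
  exact ⟨(isUnit_of_isUnit_residue ⟨n, hn⟩ (.of_mul_eq_one _ hres)).unit, ha⟩

lemma isUnit_constTerm (hn : q ^ n = 0) {z : NodeAlg R q} (hz : IsUnit z) :
    IsUnit (constTerm hn z) := by
  have := hz.map (residue q)
  rwa [residue_eq_mk_constTerm hn,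
    (Ideal.isNilpotent_span_singleton ⟨n, hn⟩).isUnit_quotient_mk_iff] at this

theorem exists_unit_X_mul_eq (hn : q ^ n = 0) {a c : NodeAlg R q} (ha : IsUnit a)
    (hc : IsUnit c)
    (hac : algebraMap R _ q * (a * c - algebraMap R _ (constTerm hn (a * c))) = 0) :
    ∃ u : (NodeAlg R q)ˣ,
      nodeMk R q (X 0) * a = algebraMap R _ (constTerm hn (a * c)) * (nodeMk R q (X 0) * u) ∧
        nodeMk R q (X 1) * c = nodeMk R q (X 1) * ↑u⁻¹ := by
  obtain ⟨f, g, hfg, hf, hg⟩ := exists_eq_algebraMap_constTerm_add_add hn hac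
  rw [map_sub, constTerm_algebraMap, sub_self, map_zero, zero_add, sub_eq_iff_eq_add] at hfg
  have hsg : IsUnit (algebraMap R _ (constTerm hn (a * c)) + g) := by
    refine isUnit_of_isUnit_residue ⟨n, hn⟩ ?_
    rw [map_add, residue_eq_mk_constTerm hn g, constTerm_eq_zero_of_X_mul_eq_zero hn 0 hg,
      map_zero, add_zero, residue_eq_mk_constTerm hn, constTerm_algebraMap,
      ← residue_eq_mk_constTerm hn]
    exact (ha.mul hc).map _
  exact exists_unit_of_mul_eq_add_add ha hsg (by linear_combination hfg) hf hg

theorem constTerm_mul_eq_of_X_mul_eq (hn : q ^ n = 0) {a c : NodeAlg R q} {lam : R}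
    {u : (NodeAlg R q)ˣ}
    (ha : nodeMk R q (X 0) * a = algebraMap R _ lam * (nodeMk R q (X 0) * u))
    (hc : nodeMk R q (X 1) * c = nodeMk R q (X 1) * ↑u⁻¹) :
    constTerm hn (a * c) = lam :=
  calc constTerm hn (a * c) = constTerm hn (algebraMap R _ lam * u * ↑u⁻¹) :=
        constTerm_mul_eq_of_X_mul_sub_eq_zero hn (by rw [mul_sub, ha]; ring)
          (by rw [mul_sub, hc, sub_self])
    _ = lam := by rw [mul_assoc, Units.mul_inv, mul_one, constTerm_algebraMap]

end NodeAlg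

open NodeAlg in
theorem node_iso_factorization_general (R : Type*) [CommRing R] (q q' : R)
    (hq : IsNilpotent q)
    (α : NodeAlg R q' ≃ₐ[R] NodeAlg R q)
    (hI₁ : Ideal.map α.toAlgHom.toRingHom
        (Ideal.span {nodeMk R q' (MvPowerSeries.X (0 : Fin 2))}) =
      Ideal.span {nodeMk R q (MvPowerSeries.X (0 : Fin 2))})
    (hI₂ : Ideal.map α.toAlgHom.toRingHom
        (Ideal.span {nodeMk R q' (MvPowerSeries.X (1 : Fin 2))}) =
      Ideal.span {nodeMk R q (MvPowerSeries.X (1 : Fin 2))}) :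
    ∃! lam : Rˣ,
      q' = (lam : R) * q ∧
      ∃ u : (NodeAlg R q)ˣ,
        α (nodeMk R q' (MvPowerSeries.X (0 : Fin 2))) =
          algebraMap R (NodeAlg R q) (lam : R) *
            (nodeMk R q (MvPowerSeries.X (0 : Fin 2)) * u) ∧
        α (nodeMk R q' (MvPowerSeries.X (1 : Fin 2))) =
          nodeMk R q (MvPowerSeries.X (1 : Fin 2)) * ↑u⁻¹ := by
  obtain ⟨n, hn⟩ := hq
  obtain ⟨a, ha⟩ := exists_unit_of_map_span_singleton_eq hn _ _ 0 hI₁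
  obtain ⟨c, hc⟩ := exists_unit_of_map_span_singleton_eq hn _ _ 1 hI₂
  change α _ = _ at ha hc
  set s := constTerm hn (a * c : NodeAlg R q)
  have hq' : algebraMap R (NodeAlg R q) q' = algebraMap R _ q * (a * c) := by
    rw [← α.commutes, ← mk_X_mul_X, map_mul, map_mul, ha, hc, ← mk_X_mul_X, map_mul]
    ring
  have hq's : q' = s * q := by
    rw [← constTerm_algebraMap hn q', hq', constTerm_algebraMap_mul, mul_comm]
  have hs : IsUnit s := isUnit_constTerm hn (a * c).isUnit
  obtain ⟨u, hu₁, hu₂⟩ := exists_unit_X_mul_eq hn a.isUnit c.isUnit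
    (by rw [mul_sub, ← hq', ← map_mul, hq's, mul_comm s q, sub_self])
  refine ⟨hs.unit, ⟨hq's, u, by rw [ha, hu₁, IsUnit.unit_spec], by rw [hc, hu₂]⟩, ?_⟩
  rintro lam ⟨-, u', hu₁', hu₂'⟩
  exact Units.ext (constTerm_mul_eq_of_X_mul_eq hn (ha ▸ hu₁') (hc ▸ hu₂')).symm

theorem node_iso_factorization (R : Type*) [CommRing R] (q q' : R)
    (hq : IsNilpotent q) (hq' : IsNilpotent q')
    (α : NodeAlg R q' ≃ₐ[R] NodeAlg R q)
    (hI₁ : Ideal.map α.toAlgHom.toRingHom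
        (Ideal.span {nodeMk R q' (MvPowerSeries.X (0 : Fin 2))}) =
      Ideal.span {nodeMk R q (MvPowerSeries.X (0 : Fin 2))})
    (hI₂ : Ideal.map α.toAlgHom.toRingHom
        (Ideal.span {nodeMk R q' (MvPowerSeries.X (1 : Fin 2))}) =
      Ideal.span {nodeMk R q (MvPowerSeries.X (1 : Fin 2))}) :
    ∃! lam : Rˣ,
      q' = (lam : R) * q ∧
      ∃ u : (NodeAlg R q)ˣ,
        α (nodeMk R q' (MvPowerSeries.X (0 : Fin 2))) =
          algebraMap R (NodeAlg R q) (lam : R) *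
            (nodeMk R q (MvPowerSeries.X (0 : Fin 2)) * u) ∧
        α (nodeMk R q' (MvPowerSeries.X (1 : Fin 2))) =
          nodeMk R q (MvPowerSeries.X (1 : Fin 2)) * ↑u⁻¹ :=
  node_iso_factorization_general R q q' hq α hI₁ hI₂
end

section
/- Over a field of characteristic zero: given a formal power series α(z)dz = (z^{g-1} + a_g z^g + a_{g+1} z^{g+1} + ⋯)dz with g ≥ 1, there exists a unique formal power series u(z) = z + c₂z² + c₃z³ + ⋯ such that u(z)^{g-1}·u'(z) = z^{g-1} + a_g z^g + a_{g+1}z^{g+1} + ⋯. -/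
/-!
Since `u(0) = 0`, the derivative of `u^g` is `g·u^(g-1)·u'`, so the equation is equivalent to
`u^g = g·∫α`, and `g·∫α = z^g·B` with `B(0) = 1`. Writing `u = z·w` with `w(0) = 1`, this becomes
`w^g = B`. Hensel's lemma for `T^g - B` at `T = 1` (its derivative `g` is a unit) gives a root,
and it is unique because `w₁^g - w₂^g = (w₁ - w₂)·∑ w₁^i w₂^(g-1-i)` with the sum a unit.
-/

open PowerSeries

namespace PowerSeries

section Root

variable {R : Type*} [CommRing R] {n : ℕ}

theorem injOn_pow_of_isUnit_natCast (hn : IsUnit (n : R)) :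
    Set.InjOn (fun w : R⟦X⟧ => w ^ n) {w | constantCoeff w = 1} := by
  intro v hv w hw hvw
  have hsum : IsUnit (∑ i ∈ Finset.range n, v ^ i * w ^ (n - 1 - i)) := by
    simpa [isUnit_iff_constantCoeff, map_sum, hv.out, hw.out] using hn
  rw [← sub_eq_zero, ← hsum.mul_right_eq_zero, geom_sum₂_mul]
  exact sub_eq_zero.mpr hvw

theorem exists_pow_eq_of_isUnit_natCast (hn : IsUnit (n : R)) {f : R⟦X⟧}
    (hf : constantCoeff f = 1) : ∃ w, constantCoeff w = 1 ∧ w ^ n = f := by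
  rcases eq_or_ne n 0 with rfl | hn0
  · have : Subsingleton R := subsingleton_of_zero_eq_one (isUnit_zero_iff.mp (by simpa using hn))
    exact ⟨f, hf, Subsingleton.elim _ _⟩
  have hX {φ : R⟦X⟧} : φ ∈ Ideal.span {X} ↔ constantCoeff φ = 0 := by
    rw [Ideal.mem_span_singleton, X_dvd_iff]
  obtain ⟨w, hroot, hw⟩ := HenselianRing.is_henselian (I := Ideal.span {(X : R⟦X⟧)})
    (Polynomial.X ^ n - Polynomial.C f) (Polynomial.monic_X_pow_sub_C f hn0) 1
    (by simp [hX, hf])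
    (by simpa [Polynomial.derivative_X_pow] using (hn.map (C (R := R))).map (Ideal.Quotient.mk _))
  refine ⟨w, by simpa [hX, sub_eq_zero] using hw, ?_⟩
  simpa [sub_eq_zero] using hroot

theorem existsUnique_pow_eq_X_pow_mul (hn : IsUnit (n : R)) {B : R⟦X⟧}
    (hB : constantCoeff B = 1) :
    ∃! u : R⟦X⟧, (constantCoeff u = 0 ∧ coeff 1 u = 1) ∧ u ^ n = X ^ n * B := by
  have coeff_one_X_mul (w : R⟦X⟧) : coeff 1 (X * w) = constantCoeff w := by
    simp [coeff_succ_X_mul 0 w]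
  obtain ⟨w, hw, rfl⟩ := exists_pow_eq_of_isUnit_natCast hn hB
  refine ⟨X * w, ⟨⟨by simp, by rw [coeff_one_X_mul, hw]⟩, mul_pow _ _ _⟩, ?_⟩
  rintro u ⟨⟨hu0, hu1⟩, hu⟩
  obtain ⟨v, rfl⟩ := X_dvd_iff.mpr hu0
  rw [coeff_one_X_mul] at hu1
  rw [injOn_pow_of_isUnit_natCast hn hu1 hw (X_pow_mul_cancel (by rwa [← mul_pow]))]

end Root

section Integral

variable {K : Type*} [Field K]

noncomputable def integral (f : K⟦X⟧) : K⟦X⟧ :=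
  mk fun
    | 0 => 0
    | k + 1 => coeff k f / (k + 1)

@[simp]
theorem constantCoeff_integral (f : K⟦X⟧) : constantCoeff (integral f) = 0 := by
  simp [integral, ← coeff_zero_eq_constantCoeff_apply]

@[simp]
theorem coeff_succ_integral (f : K⟦X⟧) (k : ℕ) :
    coeff (k + 1) (integral f) = coeff k f / (k + 1) := by
  simp [integral]

variable [CharZero K]

@[simp]
theorem derivative_integral (f : K⟦X⟧) : d⁄dX K (integral f) = f := by
  ext k
  rw [coeff_derivative, coeff_succ_integral]
  field_simp

theorem pow_pred_mul_derivative_eq_iff {n : ℕ} (hn : n ≠ 0) {u f : K⟦X⟧}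
    (hu : constantCoeff u = 0) :
    u ^ (n - 1) * d⁄dX K u = f ↔ u ^ n = n * integral f := by
  have hn' : (n : K⟦X⟧) ≠ 0 := fun h => hn (by simpa using congrArg constantCoeff h)
  have hderiv : d⁄dX K (u ^ n) = n * (u ^ (n - 1) * d⁄dX K u) := by
    rw [derivative_pow, mul_assoc]
  have hderiv' : d⁄dX K (n * integral f) = n * f := by
    rw [← nsmul_eq_mul, map_nsmul, derivative_integral, nsmul_eq_mul]
  constructor
  · intro h
    refine derivative.ext ?_ (by simp [hu, hn])
    rw [hderiv, hderiv', h]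
  · intro h
    apply mul_left_cancel₀ hn'
    rw [← hderiv, ← hderiv', h]

theorem exists_natCast_mul_integral_eq_X_pow_mul {m : ℕ} {f : K⟦X⟧}
    (hf : ∀ k < m, coeff k f = 0) :
    ∃ B, constantCoeff B = coeff m f ∧ ((m + 1 : ℕ) : K⟦X⟧) * integral f = X ^ (m + 1) * B := by
  have coeff_mul (k : ℕ) : coeff k (((m + 1 : ℕ) : K⟦X⟧) * integral f) =
      (m + 1) * coeff k (integral f) := by
    rw [← map_natCast (C (R := K)), coeff_C_mul, Nat.cast_succ]
  obtain ⟨B, hB⟩ : X ^ (m + 1) ∣ ((m + 1 : ℕ) : K⟦X⟧) * integral f := by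
    refine X_pow_dvd_iff.mpr fun k hk => ?_
    rw [coeff_mul]
    rcases k with _ | k
    · simp
    · simp [hf k (by omega)]
  refine ⟨B, ?_, hB⟩
  have := congrArg (coeff (m + 1)) hB
  rw [coeff_mul, coeff_succ_integral, mul_div_cancel₀ _ (Nat.cast_add_one_ne_zero m)] at this
  simpa [coeff_X_pow_mul'] using this.symm

end Integral

end PowerSeries

theorem unique_canonical_parameter (K : Type*) [Field K] [CharZero K]
    (g : ℕ) (hg : 1 ≤ g) (a : ℕ → K) :
    ∃! u : PowerSeries K,
      (constantCoeff u = 0 ∧ coeff 1 u = 1) ∧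
      u ^ (g - 1) * d⁄dX K u =
        PowerSeries.mk fun k => if k = g - 1 then 1 else if g ≤ k then a k else 0 := by
  obtain ⟨m, rfl⟩ := Nat.exists_eq_add_of_le' hg
  set α : K⟦X⟧ := mk fun k => if k = m + 1 - 1 then 1 else if m + 1 ≤ k then a k else 0
  obtain ⟨B, hB, hαB⟩ := exists_natCast_mul_integral_eq_X_pow_mul (m := m) (f := α)
    fun k hk => by simp [α, hk.ne, hk.not_gt]
  rw [show coeff m α = 1 by simp [α]] at hB
  refine (existsUnique_congr fun u => and_congr_right fun hu => ?_).mpr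
    (existsUnique_pow_eq_X_pow_mul (n := m + 1) (Nat.cast_ne_zero.mpr m.succ_ne_zero).isUnit hB)
  rw [pow_pred_mul_derivative_eq_iff m.succ_ne_zero hu.1, hαB]
end

section
/- Let R be a commutative ring and C a projective family of curves over Spec R obtained by gluing two smooth marked points p₁, p₂ of a family C̃₀ into a node (the case q = 0 of the clutching construction). Let U ⊆ C̃₀ be an affine open containing p₁ and p₂, and let A = {φ ∈ O(U) : p₁*φ = p₂*φ ∈ R}. Then choosing φ₀ ∈ O(U) with p₁*φ₀ = 1 and p₂*φ₀ = 0, one has O(U) = A ⊕ R·φ₀ as A-modules (A acting on R·φ₀ through O(U)); in particular O(U) is a finite A-module. -/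
/- Algebraic form of the `q = 0` clutching decomposition: `B = O(U)`, the evaluations
at the two sections are `p₁, p₂ : B →ₐ[R] R`, and
`A = {φ ∈ B : p₁(φ) = p₂(φ)}` is their equalizer subalgebra.  If `φ₀ ∈ B` satisfies
`p₁(φ₀) = 1` and `p₂(φ₀) = 0`, then `B = A ⊕ R·φ₀`; in particular `B` is a finite
`A`-module. -/
theorem glued_functions_decomposition (R B : Type*) [CommRing R] [CommRing B] [Algebra R B]
    (p₁ p₂ : B →ₐ[R] R) (φ₀ : B) (h₁ : p₁ φ₀ = 1) (h₂ : p₂ φ₀ = 0) :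
    (∀ b : B, ∃! x : AlgHom.equalizer p₁ p₂ × R,
      b = (x.1 : B) + algebraMap R B x.2 * φ₀) ∧
    Module.Finite (AlgHom.equalizer p₁ p₂) B := by
  have key : ∀ b : B, ∃! x : AlgHom.equalizer p₁ p₂ × R,
      b = (x.1 : B) + algebraMap R B x.2 * φ₀ := by
    intro b
    set r : R := p₁ b - p₂ b with hr
    have hmem : b - algebraMap R B r * φ₀ ∈ AlgHom.equalizer p₁ p₂ := by
      simp [AlgHom.mem_equalizer, map_sub, map_mul, h₁, h₂, hr]
    refine ⟨(⟨b - algebraMap R B r * φ₀, hmem⟩, r), by simp, ?_⟩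
    rintro ⟨a, c⟩ hac
    have ha := a.2
    rw [AlgHom.mem_equalizer] at ha
    have hc : c = r := by
      have e1 : p₁ b = p₁ (a : B) + c := by
        rw [hac]; simp [map_add, map_mul, h₁]
      have e2 : p₂ b = p₂ (a : B) := by
        rw [hac]; simp [map_add, map_mul, h₂]
      rw [hr, e1, e2, ha]; ring
    have haeq : (a : B) = b - algebraMap R B r * φ₀ := by
      rw [hac, hc]; ring
    ext
    · exact haeq
    · exact hc
  refine ⟨key, ?_⟩
  rw [Module.finite_def, Submodule.fg_def]
  refine ⟨({1, φ₀} : Set B), Set.toFinite _, ?_⟩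
  rw [Submodule.eq_top_iff']
  intro b
  obtain ⟨⟨a, c⟩, hx, -⟩ := key b
  have hcm : algebraMap R B c ∈ AlgHom.equalizer p₁ p₂ := by
    simp [AlgHom.mem_equalizer]
  have : b = (a : AlgHom.equalizer p₁ p₂) • (1 : B) +
      (⟨algebraMap R B c, hcm⟩ : AlgHom.equalizer p₁ p₂) • φ₀ := by
    simpa [Algebra.smul_def] using hx
  rw [this]
  exact Submodule.add_mem _
    (Submodule.smul_mem _ _ (Submodule.subset_span (by simp)))
    (Submodule.smul_mem _ _ (Submodule.subset_span (by simp)))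
end
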